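/- arXiv:2605.27818 — 3 statements merged into one kernel-verified Lean document; each statement's English description precedes it below -/
import Mathlib

section
/- Let h₁, h₂ satisfy (H1), (H2) and (H3). Then D_H is strictly negative at every center p ∈ M₁ × M₂; moreover D_H(x) ≥ 0 for every x in the separatrix S = {x : H(x) = 0} = (Z₁ × ℝ) ∪ (ℝ × Z₂), and the zero set of D_H on S is exactly the set of midpoints ℳ = (Z₁ × M₂) ∪ (M₁ × Z₂). -/
/-- (H1): every zero of `h` is simple. -/
def CondH1 (h : ℝ → ℝ) : Prop := ∀ a : ℝ, h a = 0 → deriv h a ≠ 0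

/-- (H2): every critical point of `h` is nondegenerate. -/
def CondH2 (h : ℝ → ℝ) : Prop := ∀ b : ℝ, deriv h b = 0 → deriv (deriv h) b ≠ 0

/-- (H3): the convexity-type condition `h·h'' ≤ 0`. -/
def CondH3 (h : ℝ → ℝ) : Prop := ∀ x : ℝ, h x * deriv (deriv h) x ≤ 0

/-- The factorized Hamiltonian `H(x₁,x₂) = h₁(x₁)·h₂(x₂)`. -/
def Ham (h₁ h₂ : ℝ → ℝ) : ℝ × ℝ → ℝ := fun x => h₁ x.1 * h₂ x.2

/-- The function `D_H = (h₁')²(h₂')² − h₁h₁''h₂h₂''`. -/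
noncomputable def DHFn (h₁ h₂ : ℝ → ℝ) : ℝ × ℝ → ℝ := fun x =>
  (deriv h₁ x.1) ^ 2 * (deriv h₂ x.2) ^ 2 -
    (h₁ x.1 * deriv (deriv h₁) x.1) * (h₂ x.2 * deriv (deriv h₂) x.2)

/-- `D_H` is strictly negative at the centers, nonnegative on the separatrix
`S = {H = 0}`, and its zero set on `S` consists exactly of the midpoints. -/
theorem DH_sign_on_separatrix
    (L : ℝ) (hL : 0 < L)
    (h₁ h₂ : ℝ → ℝ)
    (hreg₁ : ContDiff ℝ 3 h₁) (hreg₂ : ContDiff ℝ 3 h₂)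
    (hper₁ : Function.Periodic h₁ L) (hper₂ : Function.Periodic h₂ L)
    (hH1₁ : CondH1 h₁) (hH1₂ : CondH1 h₂)
    (hH2₁ : CondH2 h₁) (hH2₂ : CondH2 h₂)
    (hH3₁ : CondH3 h₁) (hH3₂ : CondH3 h₂) :
    -- strictly negative at every center
    (∀ p : ℝ × ℝ, deriv h₁ p.1 = 0 → deriv h₂ p.2 = 0 → DHFn h₁ h₂ p < 0) ∧
    -- nonnegative on the separatrix
    (∀ x : ℝ × ℝ, Ham h₁ h₂ x = 0 → 0 ≤ DHFn h₁ h₂ x) ∧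
    -- zero set on the separatrix = midpoints
    (∀ x : ℝ × ℝ, Ham h₁ h₂ x = 0 →
      (DHFn h₁ h₂ x = 0 ↔
        (h₁ x.1 = 0 ∧ deriv h₂ x.2 = 0) ∨ (deriv h₁ x.1 = 0 ∧ h₂ x.2 = 0))) := by

  -- key lemma: at a critical point, h·h'' < 0
  have key : ∀ (h : ℝ → ℝ), CondH1 h → CondH2 h → CondH3 h →
      ∀ b : ℝ, deriv h b = 0 → h b * deriv (deriv h) b < 0 := by
    intro h c1 c2 c3 b hb
    have hb2 := c2 b hb
    have hb0 : h b ≠ 0 := fun h0 => c1 b h0 hb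
    exact lt_of_le_of_ne (c3 b) (mul_ne_zero hb0 hb2)
  refine ⟨?_, ?_, ?_⟩
  · intro p hp1 hp2
    have k1 := key h₁ hH1₁ hH2₁ hH3₁ p.1 hp1
    have k2 := key h₂ hH1₂ hH2₂ hH3₂ p.2 hp2
    simp only [DHFn, hp1, hp2]
    nlinarith [mul_pos_of_neg_of_neg k1 k2]
  · intro x hx
    rcases mul_eq_zero.mp hx with h0 | h0 <;>
      simp only [DHFn, h0, zero_mul, mul_zero, zero_mul, sub_zero] <;> positivity
  · intro x hx
    rcases mul_eq_zero.mp hx with h0 | h0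
    · have hd : deriv h₁ x.1 ≠ 0 := hH1₁ x.1 h0
      simp only [DHFn, h0, zero_mul, sub_zero]
      constructor
      · intro he
        rcases mul_eq_zero.mp he with h | h
        · exact absurd (pow_eq_zero_iff two_ne_zero |>.mp h) hd
        · exact Or.inl ⟨trivial, pow_eq_zero_iff two_ne_zero |>.mp h⟩
      · rintro (⟨_, h⟩ | ⟨h, h2⟩)
        · rw [h]; ring
        · exact absurd h hd
    · have hd : deriv h₂ x.2 ≠ 0 := hH1₂ x.2 h0
      simp only [DHFn, h0, zero_mul, mul_zero, sub_zero]
      constructor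
      · intro he
        rcases mul_eq_zero.mp he with h | h
        · exact Or.inr ⟨pow_eq_zero_iff two_ne_zero |>.mp h, trivial⟩
        · exact absurd (pow_eq_zero_iff two_ne_zero |>.mp h) hd
      · rintro (⟨h1, h⟩ | ⟨h, _⟩)
        · exact absurd h hd
        · rw [h]; ring
end

section
/- Let h₁, h₂ satisfy (H1), (H2) and (H3), and let q = (q₁, p₂) with q₁ ∈ Z₁ and p₂ ∈ M₂ be a midpoint. Then there exist constants c₁(q) > 0, c₂(q) > 0 and r_q > 0 such that for every x = (x₁, x₂) with |x − q| < r_q, c₁(q)(x₂ − p₂)² − c₂(q)|x₁ − q₁| ≤ D_H(x) ≤ c₂(q)((x₂ − p₂)² + |x₁ − q₁|). The analogous statement holds at midpoints (p₁, q₂) with p₁ ∈ M₁, q₂ ∈ Z₂, with the roles of the two coordinates exchanged. -/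
/-- Local Lipschitz estimate from a derivative bound on a ball. -/
lemma lip_on_ball {f : ℝ → ℝ} (hf : Differentiable ℝ f) {a r C : ℝ}
    (hC : ∀ t ∈ Metric.ball a r, |deriv f t| ≤ C) {x : ℝ}
    (hx : x ∈ Metric.ball a r) : |f x - f a| ≤ C * |x - a| := by
  have hr : 0 < r := by
    have := Metric.mem_ball.mp hx
    have := dist_nonneg (x := x) (y := a)
    linarith
  have ha : a ∈ Metric.ball a r := Metric.mem_ball_self hr
  have := Convex.norm_image_sub_le_of_norm_deriv_le
    (fun t _ => hf.differentiableAt) (fun t ht => hC t ht)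
    (convex_ball a r) ha hx
  simpa [Real.norm_eq_abs] using this

/-- Pointwise δ–ε continuity at a point. -/
lemma cont_pick {f : ℝ → ℝ} {a : ℝ} (hf : Continuous f) {ε : ℝ} (hε : 0 < ε) :
    ∃ δ > 0, ∀ t : ℝ, |t - a| < δ → |f t - f a| < ε := by
  obtain ⟨δ, hδ, h⟩ := Metric.continuousAt_iff.mp hf.continuousAt ε hε
  exact ⟨δ, hδ, fun t ht => by
    have := h (x := t) (by rwa [Real.dist_eq]); rwa [Real.dist_eq] at this⟩

lemma key (h₁ h₂ : ℝ → ℝ) (hreg₁ : ContDiff ℝ 3 h₁) (hreg₂ : ContDiff ℝ 3 h₂)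
    (q₁ p₂ : ℝ) (hz : h₁ q₁ = 0) (hd1 : deriv h₁ q₁ ≠ 0)
    (hm : deriv h₂ p₂ = 0) (hd2 : deriv (deriv h₂) p₂ ≠ 0) :
    ∃ c₁ c₂ rq : ℝ, 0 < c₁ ∧ 0 < c₂ ∧ 0 < rq ∧
      ∀ x : ℝ × ℝ, ‖x - (q₁, p₂)‖ < rq →
        c₁ * (x.2 - p₂) ^ 2 - c₂ * |x.1 - q₁| ≤ DHFn h₁ h₂ x ∧
        DHFn h₁ h₂ x ≤ c₂ * ((x.2 - p₂) ^ 2 + |x.1 - q₁|) := by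
  -- regularity facts
  have hD₁ : ContDiff ℝ 2 (deriv h₁) :=
    ((contDiff_succ_iff_deriv (n := 2)).mp (by exact_mod_cast hreg₁)).2.2
  have hD₂ : ContDiff ℝ 2 (deriv h₂) :=
    ((contDiff_succ_iff_deriv (n := 2)).mp (by exact_mod_cast hreg₂)).2.2
  have hDD₁ : ContDiff ℝ 1 (deriv (deriv h₁)) :=
    ((contDiff_succ_iff_deriv (n := 1)).mp (by exact_mod_cast hD₁)).2.2
  have hDD₂ : ContDiff ℝ 1 (deriv (deriv h₂)) :=
    ((contDiff_succ_iff_deriv (n := 1)).mp (by exact_mod_cast hD₂)).2.2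
  have hdiff₁ : Differentiable ℝ h₁ := hreg₁.differentiable (by norm_num)
  have hdiff₂ : Differentiable ℝ h₂ := hreg₂.differentiable (by norm_num)
  have hdiffD₂ : Differentiable ℝ (deriv h₂) := hD₂.differentiable (by norm_num)
  set A := |deriv h₁ q₁| with hAdef
  have hA : 0 < A := abs_pos.mpr hd1
  set B := |deriv (deriv h₂) p₂| with hBdef
  have hB : 0 < B := abs_pos.mpr hd2
  set c0 := deriv (deriv h₂) p₂ with hc0
  -- continuity picks
  obtain ⟨r₁, hr₁, hE1⟩ := cont_pick (a := q₁) hD₁.continuous (half_pos hA)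
  obtain ⟨r₂, hr₂, hE2⟩ := cont_pick (a := p₂) hDD₂.continuous (half_pos hB)
  obtain ⟨r₃, hr₃, hE3⟩ := cont_pick (a := p₂) hdiff₂.continuous one_pos
  obtain ⟨r₄, hr₄, hE4⟩ := cont_pick (a := q₁) hDD₁.continuous one_pos
  set r := min (min r₁ r₂) (min (min r₃ r₄) 1) with hrdef
  have hr : 0 < r := by positivity
  have hrr₁ : r ≤ r₁ := le_trans (min_le_left _ _) (min_le_left _ _)
  have hrr₂ : r ≤ r₂ := le_trans (min_le_left _ _) (min_le_right _ _)
  have hrr₃ : r ≤ r₃ := le_trans (min_le_right _ _) (le_trans (min_le_left _ _) (min_le_left _ _))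
  have hrr₄ : r ≤ r₄ := le_trans (min_le_right _ _) (le_trans (min_le_left _ _) (min_le_right _ _))
  -- derivative of the auxiliary function g t = h₂' t - c0 t
  have hg : ∀ t : ℝ, HasDerivAt (fun s => deriv h₂ s - c0 * s)
      (deriv (deriv h₂) t - c0) t := by
    intro t
    have h1 : HasDerivAt (fun s : ℝ => c0 * s) c0 t := by
      simpa using (hasDerivAt_id t).const_mul c0
    exact ((hdiffD₂ t).hasDerivAt).sub h1
  -- constants
  set K := (3 * A / 2) ^ 2 * (3 * B / 2) ^ 2 with hK
  set M := (3 * A / 2) * (|deriv (deriv h₁) q₁| + 1) * ((|h₂ p₂| + 1) * (3 * B / 2)) with hM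
  refine ⟨(A / 2) ^ 2 * (B / 2) ^ 2, K + M + 1, r, by positivity, ?_, hr, ?_⟩
  · have : 0 ≤ K := by positivity
    have : 0 ≤ M := by positivity
    linarith
  intro x hx
  have hx1 : |x.1 - q₁| < r := by
    have h1 : |x.1 - q₁| ≤ ‖x - (q₁, p₂)‖ := by
      have := norm_fst_le (x - (q₁, p₂))
      simpa [Real.norm_eq_abs] using this
    linarith
  have hx2 : |x.2 - p₂| < r := by
    have h1 : |x.2 - p₂| ≤ ‖x - (q₁, p₂)‖ := by
      have := norm_snd_le (x - (q₁, p₂))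
      simpa [Real.norm_eq_abs] using this
    linarith
  -- E1 : bounds on |h₁' x.1|
  have e1 := hE1 x.1 (lt_of_lt_of_le hx1 hrr₁)
  have e1l : A / 2 ≤ |deriv h₁ x.1| := by
    have := abs_sub_abs_le_abs_sub (deriv h₁ x.1) (deriv h₁ q₁)
    rw [abs_sub_comm] at this
    have h2 := (abs_sub_abs_le_abs_sub (deriv h₁ q₁) (deriv h₁ x.1)).trans
      (le_of_lt (by rwa [abs_sub_comm] at e1))
    linarith [h2]
  have e1u : |deriv h₁ x.1| ≤ 3 * A / 2 := by
    have := abs_sub_abs_le_abs_sub (deriv h₁ x.1) (deriv h₁ q₁)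
    linarith [this.trans (le_of_lt e1)]
  -- E2 : |h₁ x.1| ≤ (3A/2)|x.1 - q₁|
  have e2 : |h₁ x.1| ≤ (3 * A / 2) * |x.1 - q₁| := by
    have hb : ∀ t ∈ Metric.ball q₁ r, |deriv h₁ t| ≤ 3 * A / 2 := by
      intro t ht
      have ht' : |t - q₁| < r₁ := lt_of_lt_of_le (by simpa [Real.dist_eq] using ht) hrr₁
      have := hE1 t ht'
      have h2 := abs_sub_abs_le_abs_sub (deriv h₁ t) (deriv h₁ q₁)
      linarith [h2.trans (le_of_lt this)]
    have := lip_on_ball hdiff₁ hb (x := x.1) (by simpa [Real.dist_eq] using hx1)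
    simpa [hz] using this
  -- E3 : |h₂' x.2 - c0 (x.2 - p₂)| ≤ (B/2)|x.2 - p₂|
  have e3 : |deriv h₂ x.2 - c0 * (x.2 - p₂)| ≤ (B / 2) * |x.2 - p₂| := by
    have hgdiff : Differentiable ℝ (fun s => deriv h₂ s - c0 * s) :=
      fun t => ((hg t).differentiableAt)
    have hb : ∀ t ∈ Metric.ball p₂ r,
        |deriv (fun s => deriv h₂ s - c0 * s) t| ≤ B / 2 := by
      intro t ht
      rw [(hg t).deriv]
      have ht' : |t - p₂| < r₂ := lt_of_lt_of_le (by simpa [Real.dist_eq] using ht) hrr₂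
      exact le_of_lt (hE2 t ht')
    have := lip_on_ball hgdiff hb (x := x.2) (by simpa [Real.dist_eq] using hx2)
    have heq : (fun s => deriv h₂ s - c0 * s) x.2 - (fun s => deriv h₂ s - c0 * s) p₂
        = deriv h₂ x.2 - c0 * (x.2 - p₂) := by
      simp only [hm]; ring
    rwa [heq] at this
  have habs_c0 : |c0 * (x.2 - p₂)| = B * |x.2 - p₂| := by
    rw [abs_mul, hBdef]
  have e3l : (B / 2) * |x.2 - p₂| ≤ |deriv h₂ x.2| := by
    have h2 := abs_sub_abs_le_abs_sub (c0 * (x.2 - p₂)) (deriv h₂ x.2)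
    rw [abs_sub_comm] at h2
    rw [habs_c0] at h2
    linarith [h2.trans e3]
  have e3u : |deriv h₂ x.2| ≤ (3 * B / 2) * |x.2 - p₂| := by
    have h2 := abs_sub_abs_le_abs_sub (deriv h₂ x.2) (c0 * (x.2 - p₂))
    rw [habs_c0] at h2
    linarith [h2.trans e3]
  -- E5 : crude bounds
  have e5a : |h₂ x.2| ≤ |h₂ p₂| + 1 := by
    have := hE3 x.2 (lt_of_lt_of_le hx2 hrr₃)
    have h2 := abs_sub_abs_le_abs_sub (h₂ x.2) (h₂ p₂)
    linarith [h2.trans (le_of_lt this)]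
  have e5b : |deriv (deriv h₁) x.1| ≤ |deriv (deriv h₁) q₁| + 1 := by
    have := hE4 x.1 (lt_of_lt_of_le hx1 hrr₄)
    have h2 := abs_sub_abs_le_abs_sub (deriv (deriv h₁) x.1) (deriv (deriv h₁) q₁)
    linarith [h2.trans (le_of_lt this)]
  have e5c : |deriv (deriv h₂) x.2| ≤ 3 * B / 2 := by
    have := hE2 x.2 (lt_of_lt_of_le hx2 hrr₂)
    have h2 := abs_sub_abs_le_abs_sub (deriv (deriv h₂) x.2) (deriv (deriv h₂) p₂)
    linarith [h2.trans (le_of_lt this)]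
  -- now assemble
  set P := (deriv h₁ x.1) ^ 2 * (deriv h₂ x.2) ^ 2 with hP
  set Q := (h₁ x.1 * deriv (deriv h₁) x.1) * (h₂ x.2 * deriv (deriv h₂) x.2) with hQ
  have hDH : DHFn h₁ h₂ x = P - Q := rfl
  have hPl : (A / 2) ^ 2 * (B / 2) ^ 2 * (x.2 - p₂) ^ 2 ≤ P := by
    have h1 : (A / 2) ^ 2 ≤ (deriv h₁ x.1) ^ 2 := by
      rw [← sq_abs (deriv h₁ x.1)]
      exact pow_le_pow_left₀ (by positivity) e1l 2
    have h2 : (B / 2) ^ 2 * (x.2 - p₂) ^ 2 ≤ (deriv h₂ x.2) ^ 2 := by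
      rw [← sq_abs (deriv h₂ x.2)]
      calc (B / 2) ^ 2 * (x.2 - p₂) ^ 2 = ((B / 2) * |x.2 - p₂|) ^ 2 := by
            rw [mul_pow, sq_abs]
        _ ≤ |deriv h₂ x.2| ^ 2 := pow_le_pow_left₀ (by positivity) e3l 2
    calc (A / 2) ^ 2 * (B / 2) ^ 2 * (x.2 - p₂) ^ 2
        = (A / 2) ^ 2 * ((B / 2) ^ 2 * (x.2 - p₂) ^ 2) := by ring
      _ ≤ (deriv h₁ x.1) ^ 2 * (deriv h₂ x.2) ^ 2 :=
          mul_le_mul h1 h2 (by positivity) (by positivity)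
  have hPu : P ≤ K * (x.2 - p₂) ^ 2 := by
    have h1 : (deriv h₁ x.1) ^ 2 ≤ (3 * A / 2) ^ 2 := by
      rw [← sq_abs (deriv h₁ x.1)]
      exact pow_le_pow_left₀ (by positivity) e1u 2
    have h2 : (deriv h₂ x.2) ^ 2 ≤ (3 * B / 2) ^ 2 * (x.2 - p₂) ^ 2 := by
      rw [← sq_abs (deriv h₂ x.2)]
      calc |deriv h₂ x.2| ^ 2 ≤ ((3 * B / 2) * |x.2 - p₂|) ^ 2 :=
            pow_le_pow_left₀ (by positivity) e3u 2
        _ = (3 * B / 2) ^ 2 * (x.2 - p₂) ^ 2 := by rw [mul_pow, sq_abs]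
    calc P ≤ (3 * A / 2) ^ 2 * ((3 * B / 2) ^ 2 * (x.2 - p₂) ^ 2) :=
          mul_le_mul h1 h2 (by positivity) (by positivity)
      _ = K * (x.2 - p₂) ^ 2 := by rw [hK]; ring
  have hQabs : |Q| ≤ M * |x.1 - q₁| := by
    have h1 : |h₁ x.1 * deriv (deriv h₁) x.1| ≤
        ((3 * A / 2) * |x.1 - q₁|) * (|deriv (deriv h₁) q₁| + 1) := by
      rw [abs_mul]
      exact mul_le_mul e2 e5b (abs_nonneg _) (by positivity)
    have h2 : |h₂ x.2 * deriv (deriv h₂) x.2| ≤ (|h₂ p₂| + 1) * (3 * B / 2) := by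
      rw [abs_mul]
      exact mul_le_mul e5a e5c (abs_nonneg _) (by positivity)
    calc |Q| = |h₁ x.1 * deriv (deriv h₁) x.1| * |h₂ x.2 * deriv (deriv h₂) x.2| := by
          rw [hQ, abs_mul]
      _ ≤ (((3 * A / 2) * |x.1 - q₁|) * (|deriv (deriv h₁) q₁| + 1)) *
            ((|h₂ p₂| + 1) * (3 * B / 2)) :=
          mul_le_mul h1 h2 (abs_nonneg _) (by positivity)
      _ = M * |x.1 - q₁| := by rw [hM]; ring
  have hKM : 0 ≤ K := by positivity
  have hMM : 0 ≤ M := by positivity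
  have habs1 : 0 ≤ |x.1 - q₁| := abs_nonneg _
  have hQl : -(M * |x.1 - q₁|) ≤ Q := neg_le_of_abs_le hQabs
  have hQu : Q ≤ M * |x.1 - q₁| := le_of_abs_le hQabs
  have hsq : 0 ≤ (x.2 - p₂) ^ 2 := sq_nonneg _
  have hm1 : M * |x.1 - q₁| ≤ (K + M + 1) * |x.1 - q₁| :=
    mul_le_mul_of_nonneg_right (by linarith) habs1
  have hm2 : K * (x.2 - p₂) ^ 2 ≤ (K + M + 1) * (x.2 - p₂) ^ 2 :=
    mul_le_mul_of_nonneg_right (by linarith) hsq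
  have hdist : (K + M + 1) * ((x.2 - p₂) ^ 2 + |x.1 - q₁|)
      = (K + M + 1) * (x.2 - p₂) ^ 2 + (K + M + 1) * |x.1 - q₁| := by ring
  constructor
  · rw [hDH]; linarith
  · rw [hDH]; rw [hdist]; linarith

/-- Order-two vanishing of `D_H` at a midpoint `q = (q₁, p₂) ∈ Z₁ × M₂`, with
quantitative two-sided bounds; and the analogous statement at midpoints of
`M₁ × Z₂`, with the roles of the two coordinates exchanged. -/
theorem DH_quadratic_vanishing_at_midpoints
    (L : ℝ) (hL : 0 < L)
    (h₁ h₂ : ℝ → ℝ)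
    (hreg₁ : ContDiff ℝ 3 h₁) (hreg₂ : ContDiff ℝ 3 h₂)
    (hper₁ : Function.Periodic h₁ L) (hper₂ : Function.Periodic h₂ L)
    (hH1₁ : CondH1 h₁) (hH1₂ : CondH1 h₂)
    (hH2₁ : CondH2 h₁) (hH2₂ : CondH2 h₂)
    (hH3₁ : CondH3 h₁) (hH3₂ : CondH3 h₂) :
    -- midpoints of type `Z₁ × M₂`
    (∀ q₁ p₂ : ℝ, h₁ q₁ = 0 → deriv h₂ p₂ = 0 →
      ∃ c₁ c₂ rq : ℝ, 0 < c₁ ∧ 0 < c₂ ∧ 0 < rq ∧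
        ∀ x : ℝ × ℝ, ‖x - (q₁, p₂)‖ < rq →
          c₁ * (x.2 - p₂) ^ 2 - c₂ * |x.1 - q₁| ≤ DHFn h₁ h₂ x ∧
          DHFn h₁ h₂ x ≤ c₂ * ((x.2 - p₂) ^ 2 + |x.1 - q₁|)) ∧
    -- midpoints of type `M₁ × Z₂`
    (∀ p₁ q₂ : ℝ, deriv h₁ p₁ = 0 → h₂ q₂ = 0 →
      ∃ c₁ c₂ rq : ℝ, 0 < c₁ ∧ 0 < c₂ ∧ 0 < rq ∧
        ∀ x : ℝ × ℝ, ‖x - (p₁, q₂)‖ < rq →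
          c₁ * (x.1 - p₁) ^ 2 - c₂ * |x.2 - q₂| ≤ DHFn h₁ h₂ x ∧
          DHFn h₁ h₂ x ≤ c₂ * ((x.1 - p₁) ^ 2 + |x.2 - q₂|)) := by
  constructor
  · intro q₁ p₂ hz hm
    exact key h₁ h₂ hreg₁ hreg₂ q₁ p₂ hz (hH1₁ q₁ hz) hm (hH2₂ p₂ hm)
  · intro p₁ q₂ hm hz
    obtain ⟨c₁, c₂, rq, hc₁, hc₂, hrq, hbd⟩ :=
      key h₂ h₁ hreg₂ hreg₁ q₂ p₁ hz (hH1₂ q₂ hz) hm (hH2₁ p₁ hm)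
    refine ⟨c₁, c₂, rq, hc₁, hc₂, hrq, fun x hx => ?_⟩
    have hswap : ‖((x.2, x.1) : ℝ × ℝ) - (q₂, p₁)‖ < rq := by
      rw [Prod.norm_def] at hx ⊢
      simpa [max_comm] using hx
    have := hbd (x.2, x.1) hswap
    have hDH : DHFn h₂ h₁ (x.2, x.1) = DHFn h₁ h₂ x := by
      simp only [DHFn]; ring
    rw [hDH] at this
    exact this
end

section
/- Let h₁, h₂ satisfy (H1), (H2) and (H3). Then Λ(x) ≥ 2 h₁'(x₁)² h₂'(x₂)² ≥ 0 for every x ∈ ℝ², and Λ(x) = 0 if and only if x ∈ M₁ × M₂ (i.e. x is a center). Consequently, for every 𝔯 > 0 such that the closed balls of radius 𝔯 around the centers are pairwise disjoint, the infimum of Λ over the compact set D_𝔯 ∩ [0, L]², where D_𝔯 = ℝ² minus the union of the open balls B(p, 𝔯) over centers p ∈ M₁ × M₂, is strictly positive. -/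
/-- The function `Λ = 2(h₁')²(h₂')² − (h₁')²h₂h₂'' − h₁h₁''(h₂')²`. -/
noncomputable def LambdaFn (h₁ h₂ : ℝ → ℝ) : ℝ × ℝ → ℝ := fun x =>
  2 * (deriv h₁ x.1) ^ 2 * (deriv h₂ x.2) ^ 2 -
    (deriv h₁ x.1) ^ 2 * (h₂ x.2 * deriv (deriv h₂) x.2) -
    (h₁ x.1 * deriv (deriv h₁) x.1) * (deriv h₂ x.2) ^ 2

/-- The set of centers of `H = h₁h₂`, i.e. `M₁ × M₂`. -/
def centers (h₁ h₂ : ℝ → ℝ) : Set (ℝ × ℝ) :=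
  {p : ℝ × ℝ | deriv h₁ p.1 = 0 ∧ deriv h₂ p.2 = 0}

/-- `Λ ≥ 2(h₁')²(h₂')² ≥ 0` everywhere, `Λ` vanishes exactly at the centers,
and `Λ` is bounded below by a positive constant on `D_𝔯 ∩ [0,L]²`, where `D_𝔯`
is the complement of the union of the open balls of radius `𝔯` around the
centers, provided the closed balls of radius `𝔯` around the centers are
pairwise disjoint. -/
theorem Lambda_nonneg_and_positive_off_centers
    (L : ℝ) (hL : 0 < L)
    (h₁ h₂ : ℝ → ℝ)
    (hreg₁ : ContDiff ℝ 3 h₁) (hreg₂ : ContDiff ℝ 3 h₂)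
    (hper₁ : Function.Periodic h₁ L) (hper₂ : Function.Periodic h₂ L)
    (hH1₁ : CondH1 h₁) (hH1₂ : CondH1 h₂)
    (hH2₁ : CondH2 h₁) (hH2₂ : CondH2 h₂)
    (hH3₁ : CondH3 h₁) (hH3₂ : CondH3 h₂) :
    (∀ x : ℝ × ℝ,
      2 * (deriv h₁ x.1) ^ 2 * (deriv h₂ x.2) ^ 2 ≤ LambdaFn h₁ h₂ x ∧
      0 ≤ 2 * (deriv h₁ x.1) ^ 2 * (deriv h₂ x.2) ^ 2) ∧
    (∀ x : ℝ × ℝ, LambdaFn h₁ h₂ x = 0 ↔ x ∈ centers h₁ h₂) ∧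
    ∀ ρ : ℝ, 0 < ρ →
      (∀ p ∈ centers h₁ h₂, ∀ q ∈ centers h₁ h₂, p ≠ q →
        Disjoint (Metric.closedBall p ρ) (Metric.closedBall q ρ)) →
      ∃ c : ℝ, 0 < c ∧
        ∀ x : ℝ × ℝ, (∀ p ∈ centers h₁ h₂, ρ ≤ dist x p) →
          x.1 ∈ Set.Icc (0 : ℝ) L → x.2 ∈ Set.Icc (0 : ℝ) L →
          c ≤ LambdaFn h₁ h₂ x := by

  -- First claim: the pointwise lower bound
  have key1 : ∀ x : ℝ × ℝ,
      2 * (deriv h₁ x.1) ^ 2 * (deriv h₂ x.2) ^ 2 ≤ LambdaFn h₁ h₂ x ∧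
      0 ≤ 2 * (deriv h₁ x.1) ^ 2 * (deriv h₂ x.2) ^ 2 := by
    intro x
    refine ⟨?_, by positivity⟩
    have a := hH3₁ x.1
    have b := hH3₂ x.2
    unfold LambdaFn
    nlinarith [sq_nonneg (deriv h₁ x.1), sq_nonneg (deriv h₂ x.2)]
  have key2 : ∀ x : ℝ × ℝ, LambdaFn h₁ h₂ x = 0 ↔ x ∈ centers h₁ h₂ := by
    intro x
    constructor
    · intro hΛ
      have hA : (deriv h₁ x.1) ^ 2 * (h₂ x.2 * deriv (deriv h₂) x.2) ≤ 0 := by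
        have := hH3₂ x.2
        nlinarith [sq_nonneg (deriv h₁ x.1)]
      have hB : (h₁ x.1 * deriv (deriv h₁) x.1) * (deriv h₂ x.2) ^ 2 ≤ 0 := by
        have := hH3₁ x.1
        nlinarith [sq_nonneg (deriv h₂ x.2)]
      have hC : 0 ≤ 2 * (deriv h₁ x.1) ^ 2 * (deriv h₂ x.2) ^ 2 := by positivity
      have hsum : 2 * (deriv h₁ x.1) ^ 2 * (deriv h₂ x.2) ^ 2 -
          (deriv h₁ x.1) ^ 2 * (h₂ x.2 * deriv (deriv h₂) x.2) -
          (h₁ x.1 * deriv (deriv h₁) x.1) * (deriv h₂ x.2) ^ 2 = 0 := hΛ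
      have e1 : 2 * (deriv h₁ x.1) ^ 2 * (deriv h₂ x.2) ^ 2 = 0 := by linarith
      have e2 : (deriv h₁ x.1) ^ 2 * (h₂ x.2 * deriv (deriv h₂) x.2) = 0 := by linarith
      have e3 : (h₁ x.1 * deriv (deriv h₁) x.1) * (deriv h₂ x.2) ^ 2 = 0 := by linarith
      have ha : deriv h₁ x.1 = 0 := by
        by_contra ha
        have hb : deriv h₂ x.2 = 0 := by
          have : (deriv h₂ x.2) ^ 2 = 0 := by
            have ha2 : 0 < (deriv h₁ x.1) ^ 2 :=
              lt_of_le_of_ne (sq_nonneg _) (Ne.symm (pow_ne_zero _ ha))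
            nlinarith [sq_nonneg (deriv h₂ x.2)]
          exact pow_eq_zero_iff (n := 2) (by norm_num) |>.mp this
        have hc : h₂ x.2 * deriv (deriv h₂) x.2 = 0 := by
          rcases mul_eq_zero.mp e2 with h | h
          · exact absurd (pow_eq_zero_iff (n := 2) (by norm_num) |>.mp h) ha
          · exact h
        have h2'' := hH2₂ x.2 hb
        rcases mul_eq_zero.mp hc with h | h
        · exact hH1₂ x.2 h hb
        · exact h2'' h
      have hb : deriv h₂ x.2 = 0 := by
        by_contra hb
        have hd : h₁ x.1 * deriv (deriv h₁) x.1 = 0 := by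
          rcases mul_eq_zero.mp e3 with h | h
          · exact h
          · exact absurd (pow_eq_zero_iff (n := 2) (by norm_num) |>.mp h) hb
        have h1'' := hH2₁ x.1 ha
        rcases mul_eq_zero.mp hd with h | h
        · exact hH1₁ x.1 h ha
        · exact h1'' h
      exact ⟨ha, hb⟩
    · rintro ⟨ha, hb⟩
      unfold LambdaFn
      rw [ha, hb]
      ring
  refine ⟨key1, key2, ?_⟩
  intro ρ hρ _hdisj
  -- continuity of Λ
  have hd1 : ContDiff ℝ 2 (deriv h₁) :=
    (contDiff_succ_iff_deriv.mp (show ContDiff ℝ (2 + 1) h₁ from hreg₁)).2.2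
  have hd2 : ContDiff ℝ 2 (deriv h₂) :=
    (contDiff_succ_iff_deriv.mp (show ContDiff ℝ (2 + 1) h₂ from hreg₂)).2.2
  have hc0 : Continuous h₁ := hreg₁.continuous
  have hc0' : Continuous h₂ := hreg₂.continuous
  have hc1 : Continuous (deriv h₁) := hd1.continuous
  have hc2 : Continuous (deriv h₂) := hd2.continuous
  have hc1' : Continuous (deriv (deriv h₁)) :=
    ((contDiff_succ_iff_deriv.mp (show ContDiff ℝ (1 + 1) (deriv h₁) from hd1)).2.2).continuous
  have hc2' : Continuous (deriv (deriv h₂)) :=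
    ((contDiff_succ_iff_deriv.mp (show ContDiff ℝ (1 + 1) (deriv h₂) from hd2)).2.2).continuous
  have hcΛ : Continuous (LambdaFn h₁ h₂) := by
    unfold LambdaFn
    fun_prop (disch := assumption)
  set S : Set (ℝ × ℝ) :=
    (Set.Icc (0 : ℝ) L ×ˢ Set.Icc (0 : ℝ) L) ∩
      {x : ℝ × ℝ | ∀ p ∈ centers h₁ h₂, ρ ≤ dist x p} with hS
  have hSclosed : IsClosed {x : ℝ × ℝ | ∀ p ∈ centers h₁ h₂, ρ ≤ dist x p} := by
    have : {x : ℝ × ℝ | ∀ p ∈ centers h₁ h₂, ρ ≤ dist x p} =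
        ⋂ p ∈ centers h₁ h₂, {x : ℝ × ℝ | ρ ≤ dist x p} := by
      ext x; simp
    rw [this]
    exact isClosed_biInter fun p _ =>
      isClosed_le continuous_const (continuous_id.dist continuous_const)
  have hScompact : IsCompact S :=
    (isCompact_Icc.prod isCompact_Icc).inter_right hSclosed
  rcases S.eq_empty_or_nonempty with hemp | hne
  · refine ⟨1, one_pos, fun x hx hx1 hx2 => ?_⟩
    have hxS : x ∈ S := ⟨Set.mk_mem_prod hx1 hx2, hx⟩
    rw [hemp] at hxS
    exact hxS.elim
  · obtain ⟨x₀, hx₀S, hx₀min⟩ :=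
      hScompact.exists_isMinOn hne hcΛ.continuousOn
    have hx₀pos : 0 < LambdaFn h₁ h₂ x₀ := by
      have hnn : 0 ≤ LambdaFn h₁ h₂ x₀ := le_trans (key1 x₀).2 (key1 x₀).1
      rcases hnn.lt_or_eq with h | h
      · exact h
      · exfalso
        have hcen : x₀ ∈ centers h₁ h₂ := (key2 x₀).mp h.symm
        have := hx₀S.2 x₀ hcen
        simp at this
        linarith
    refine ⟨LambdaFn h₁ h₂ x₀, hx₀pos, fun x hx hx1 hx2 => ?_⟩
    exact hx₀min (Set.mem_inter (Set.mk_mem_prod hx1 hx2) hx)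
end
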